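/- arXiv:1810.01436 — 2 statements merged into one kernel-verified Lean document; each statement's English description precedes it below -/
import Mathlib

section
/- If for each i ∈ I the function u_i is α_i-strongly concave, then the map H' defined by H'(x) = ∏_i { c(Σ_j x_j) + g_i : g_i ∈ ∂(−u_i)(x_i) } is α-strongly monotone with α = min_i α_i; that is, for all profiles x, y ∈ ∏_i X_i and all g ∈ H'(x), h ∈ H'(y), Σ_i ⟨g_i − h_i, x_i − y_i⟩ ≥ α · Σ_i ‖x_i − y_i‖². -/
/-! The congestion term `c(Σ_j x_j)` is monotone because each `c_t` is non-decreasing, and a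
subgradient `g` of an `m`-strongly convex `f` at `x` satisfies the quadratic lower bound
`f x + ⟪g, y - x⟫ + m / 2 * ‖y - x‖ ^ 2 ≤ f y` (compare the subgradient inequality at
`x + t • (y - x)` with strong convexity and let `t → 0⁺`). Adding that bound at `x` and at `y`
makes `∂f` `m`-strongly monotone, and summing over the players gives the theorem, since
`αmin ≤ α i`. -/

open scoped RealInnerProductSpace BigOperators

noncomputable section

def cvec {T : ℕ} (c : Fin T → ℝ → ℝ) (X : EuclideanSpace ℝ (Fin T)) :
    EuclideanSpace ℝ (Fin T) :=
  WithLp.toLp 2 (fun t => c t (X t))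

def subdiff {T : ℕ} (f : EuclideanSpace ℝ (Fin T) → ℝ) (x : EuclideanSpace ℝ (Fin T)) :
    Set (EuclideanSpace ℝ (Fin T)) :=
  {g | ∀ y, f x + ⟪g, y - x⟫ ≤ f y}

lemma nonpos_of_forall_Ioc_le_mul {a b : ℝ} (h : ∀ t ∈ Set.Ioc (0 : ℝ) 1, a ≤ t * b) :
    a ≤ 0 := by
  have hlim : Filter.Tendsto (fun t : ℝ => t * b) (nhdsWithin 0 (Set.Ioi 0)) (nhds 0) :=
    ((continuous_mul_const b).tendsto' 0 0 (zero_mul b)).mono_left nhdsWithin_le_nhds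
  exact ge_of_tendsto hlim (Filter.mem_of_superset (Ioc_mem_nhdsGT one_pos) h)

section StrongConvexity

variable {E : Type*} [NormedAddCommGroup E] [InnerProductSpace ℝ E] {f : E → ℝ} {m : ℝ}

lemma StrongConvexOn.add_inner_add_le (hf : StrongConvexOn Set.univ m f) {x g : E}
    (hg : ∀ z, f x + ⟪g, z - x⟫ ≤ f z) (y : E) :
    f x + ⟪g, y - x⟫ + m / 2 * ‖y - x‖ ^ 2 ≤ f y := by
  rw [← sub_nonpos]
  refine nonpos_of_forall_Ioc_le_mul (b := m / 2 * ‖y - x‖ ^ 2) fun t ⟨ht0, ht1⟩ => ?_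
  have hsub : f x + t * ⟪g, y - x⟫ ≤ f ((1 - t) • x + t • y) := by
    have hz : (1 - t) • x + t • y - x = t • (y - x) := by module
    simpa [hz, real_inner_smul_right] using hg ((1 - t) • x + t • y)
  have hconv := hf.2 (Set.mem_univ x) (Set.mem_univ y) (sub_nonneg.2 ht1) ht0.le
    (sub_add_cancel 1 t)
  rw [smul_eq_mul, smul_eq_mul, norm_sub_rev] at hconv
  refine le_of_mul_le_mul_left ?_ ht0
  nlinarith

lemma StrongConvexOn.le_inner_sub_sub (hf : StrongConvexOn Set.univ m f) {x y g h : E}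
    (hg : ∀ z, f x + ⟪g, z - x⟫ ≤ f z) (hh : ∀ z, f y + ⟪h, z - y⟫ ≤ f z) :
    m * ‖x - y‖ ^ 2 ≤ ⟪g - h, x - y⟫ := by
  have hxy := hf.add_inner_add_le hg y
  have hyx := hf.add_inner_add_le hh x
  have hinner : ⟪g - h, x - y⟫ = -⟪g, y - x⟫ - ⟪h, x - y⟫ := by
    rw [← neg_sub x y, inner_neg_right, inner_sub_left]; ring
  rw [norm_sub_rev] at hxy
  linarith

end StrongConvexity

lemma inner_cvec_sub_cvec_nonneg {T : ℕ} {c : Fin T → ℝ → ℝ} (hc : ∀ t, Monotone (c t))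
    (a b : EuclideanSpace ℝ (Fin T)) :
    0 ≤ ⟪cvec c a - cvec c b, a - b⟫ := by
  refine Finset.sum_nonneg fun t _ => ?_
  simp only [cvec, PiLp.sub_apply, RCLike.inner_apply, conj_trivial]
  rcases le_total (a t) (b t) with hab | hab
  · exact mul_nonneg_of_nonpos_of_nonpos (sub_nonpos.2 hab) (sub_nonpos.2 (hc t hab))
  · exact mul_nonneg (sub_nonneg.2 hab) (sub_nonneg.2 (hc t hab))

theorem strong_monotonicity_of_H'_general {I T : ℕ}
    (u : Fin I → EuclideanSpace ℝ (Fin T) → ℝ)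
    (α : Fin I → ℝ)
    (hstrong : ∀ i, ConvexOn ℝ Set.univ (fun z => - u i z - (α i / 2) * ‖z‖ ^ 2))
    (c : Fin T → ℝ → ℝ) (hc : ∀ t, Monotone (c t))
    (αmin : ℝ) (hαmin : IsGLB (Set.range α) αmin)
    (x y : Fin I → EuclideanSpace ℝ (Fin T))
    (g h : Fin I → EuclideanSpace ℝ (Fin T))
    (hg : ∀ i, ∃ gi ∈ subdiff (fun z => - u i z) (x i), g i = cvec c (∑ j, x j) + gi)
    (hh : ∀ i, ∃ hi ∈ subdiff (fun z => - u i z) (y i), h i = cvec c (∑ j, y j) + hi) :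
    αmin * ∑ i, ‖x i - y i‖ ^ 2 ≤ ∑ i, ⟪g i - h i, x i - y i⟫ := by
  choose gi hgi hgeq using hg
  choose hi hhi hheq using hh
  have hsplit : ∑ i, ⟪g i - h i, x i - y i⟫ =
      ⟪cvec c (∑ j, x j) - cvec c (∑ j, y j), ∑ j, x j - ∑ j, y j⟫ +
        ∑ i, ⟪gi i - hi i, x i - y i⟫ := by
    have hgh : ∀ i, g i - h i = (cvec c (∑ j, x j) - cvec c (∑ j, y j)) + (gi i - hi i) := by
      intro i; rw [hgeq i, hheq i]; abel
    simp only [hgh, inner_add_left, Finset.sum_add_distrib, ← Finset.sum_sub_distrib, inner_sum]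
  have hplayer : ∀ i, αmin * ‖x i - y i‖ ^ 2 ≤ ⟪gi i - hi i, x i - y i⟫ := fun i =>
    ((strongConvexOn_iff_convex.2 (hstrong i)).mono (hαmin.1 ⟨i, rfl⟩)).le_inner_sub_sub
      (hgi i) (hhi i)
  rw [hsplit, Finset.mul_sum]
  exact le_add_of_nonneg_of_le (inner_cvec_sub_cvec_nonneg hc _ _)
    (Finset.sum_le_sum fun i _ => hplayer i)

/-- If each utility is strongly concave, H' is strongly monotone with modulus min_i α_i. -/
theorem strong_monotonicity_of_H' {I T : ℕ}
    (X : Fin I → Set (EuclideanSpace ℝ (Fin T)))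
    (hXconv : ∀ i, Convex ℝ (X i)) (hXcpt : ∀ i, IsCompact (X i))
    (u : Fin I → EuclideanSpace ℝ (Fin T) → ℝ)
    (α : Fin I → ℝ) (hαpos : ∀ i, 0 < α i)
    (hstrong : ∀ i, ConvexOn ℝ Set.univ (fun z => - u i z - (α i / 2) * ‖z‖ ^ 2))
    (hucont : ∀ i, Continuous (u i))
    (c : Fin T → ℝ → ℝ) (hc : ∀ t, Monotone (c t)) (hcconv : ∀ t, ConvexOn ℝ Set.univ (c t))
    (hccont : ∀ t, Continuous (c t))
    (αmin : ℝ) (hαmin : IsGLB (Set.range α) αmin)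
    (x y : Fin I → EuclideanSpace ℝ (Fin T))
    (hx : ∀ i, x i ∈ X i) (hy : ∀ i, y i ∈ X i)
    (g h : Fin I → EuclideanSpace ℝ (Fin T))
    (hg : ∀ i, ∃ gi ∈ subdiff (fun z => - u i z) (x i), g i = cvec c (∑ j, x j) + gi)
    (hh : ∀ i, ∃ hi ∈ subdiff (fun z => - u i z) (y i), h i = cvec c (∑ j, y j) + hi) :
    αmin * ∑ i, ‖x i - y i‖ ^ 2 ≤ ∑ i, ⟪g i - h i, x i - y i⟫ :=
  strong_monotonicity_of_H'_general u α hstrong c hc αmin hαmin x y g h hg hh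
end
end

section
/- If for each t ∈ {1,...,T} the cost function c_t : R → R is β_t-strictly increasing (i.e., (c_t(a) − c_t(b))(a − b) ≥ β_t (a − b)² for all a, b), then the map H'(x) = ∏_i { c(Σ_j x_j) + g_i : g_i ∈ ∂(−u_i)(x_i) } is β-aggregatively strongly monotone with β = min_t β_t; that is, for all profiles x, y with aggregates X = Σ_i x_i and Y = Σ_i y_i, and all g ∈ H'(x), h ∈ H'(y): Σ_i ⟨g_i − h_i, x_i − y_i⟩ ≥ β ‖X − Y‖². -/
open scoped RealInnerProductSpace BigOperators

noncomputable section

/-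
Since the cost part c(X) of g_i is the same for every player, the pairing splits into
⟪c(X) - c(Y), X - Y⟫, which is at least β ‖X - Y‖² coordinatewise, plus the pairings of
subgradients of -u_i, each nonnegative because subdifferentials are monotone.
-/

theorem subdiff_monotone {T : ℕ} {f : EuclideanSpace ℝ (Fin T) → ℝ}
    {x y g h : EuclideanSpace ℝ (Fin T)} (hg : g ∈ subdiff f x) (hh : h ∈ subdiff f y) :
    0 ≤ ⟪g - h, x - y⟫ := by
  have hxy := hg y
  have hyx := hh x
  simp only [inner_sub_left, inner_sub_right] at hxy hyx ⊢
  linarith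

theorem mul_norm_sub_sq_le_inner_cvec_sub {T : ℕ} {c : Fin T → ℝ → ℝ} {β : Fin T → ℝ} {b : ℝ}
    (hc : ∀ t, ∀ a a' : ℝ, β t * (a - a') ^ 2 ≤ (c t a - c t a') * (a - a'))
    (hb : b ∈ lowerBounds (Set.range β)) (X Y : EuclideanSpace ℝ (Fin T)) :
    b * ‖X - Y‖ ^ 2 ≤ ⟪cvec c X - cvec c Y, X - Y⟫ := by
  rw [EuclideanSpace.norm_sq_eq, PiLp.inner_apply, Finset.mul_sum]
  refine Finset.sum_le_sum fun t _ => ?_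
  simp only [cvec, PiLp.sub_apply, Real.norm_eq_abs, sq_abs, RCLike.inner_apply, conj_trivial]
  calc b * (X t - Y t) ^ 2 ≤ β t * (X t - Y t) ^ 2 :=
        mul_le_mul_of_nonneg_right (hb ⟨t, rfl⟩) (sq_nonneg _)
    _ ≤ (c t (X t) - c t (Y t)) * (X t - Y t) := hc t _ _
    _ = (X t - Y t) * (c t (X t) - c t (Y t)) := mul_comm _ _

theorem sum_inner_add_sub_add {ι E : Type*} [Fintype ι] [NormedAddCommGroup E]
    [InnerProductSpace ℝ E] (C D : E) (g h x y : ι → E) :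
    ∑ i, ⟪(C + g i) - (D + h i), x i - y i⟫
      = ⟪C - D, (∑ i, x i) - ∑ i, y i⟫ + ∑ i, ⟪g i - h i, x i - y i⟫ := by
  rw [← Finset.sum_sub_distrib, inner_sum, ← Finset.sum_add_distrib]
  refine Finset.sum_congr rfl fun i _ => ?_
  rw [← inner_add_left]
  congr 1
  abel

theorem agg_strong_monotonicity_of_H'_general {I T : ℕ}
    (u : Fin I → EuclideanSpace ℝ (Fin T) → ℝ)
    (c : Fin T → ℝ → ℝ) (β : Fin T → ℝ)
    (hstrict : ∀ t, ∀ a b : ℝ, β t * (a - b) ^ 2 ≤ (c t a - c t b) * (a - b))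
    (βmin : ℝ) (hβmin : IsGLB (Set.range β) βmin)
    (x y : Fin I → EuclideanSpace ℝ (Fin T))
    (g h : Fin I → EuclideanSpace ℝ (Fin T))
    (hg : ∀ i, ∃ gi ∈ subdiff (fun z => - u i z) (x i), g i = cvec c (∑ j, x j) + gi)
    (hh : ∀ i, ∃ hi ∈ subdiff (fun z => - u i z) (y i), h i = cvec c (∑ j, y j) + hi) :
    βmin * ‖(∑ i, x i) - (∑ i, y i)‖ ^ 2 ≤ ∑ i, ⟪g i - h i, x i - y i⟫ := by
  choose gi hgi hgdef using hg
  choose hi hhi hhdef using hh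
  simp only [hgdef, hhdef, sum_inner_add_sub_add]
  have haggregate := mul_norm_sub_sq_le_inner_cvec_sub hstrict hβmin.1 (∑ i, x i) (∑ i, y i)
  have hsubgrad : 0 ≤ ∑ i, ⟪gi i - hi i, x i - y i⟫ :=
    Finset.sum_nonneg fun i _ => subdiff_monotone (hgi i) (hhi i)
  linarith

/-- If each cost is β_t-strictly increasing, H' is aggregatively strongly monotone
with modulus min_t β_t. -/
theorem agg_strong_monotonicity_of_H' {I T : ℕ}
    (X : Fin I → Set (EuclideanSpace ℝ (Fin T)))
    (hXconv : ∀ i, Convex ℝ (X i)) (hXcpt : ∀ i, IsCompact (X i))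
    (u : Fin I → EuclideanSpace ℝ (Fin T) → ℝ)
    (hu : ∀ i, ConcaveOn ℝ Set.univ (u i)) (hucont : ∀ i, Continuous (u i))
    (c : Fin T → ℝ → ℝ) (β : Fin T → ℝ) (hβpos : ∀ t, 0 < β t)
    (hcconv : ∀ t, ConvexOn ℝ Set.univ (c t)) (hccont : ∀ t, Continuous (c t))
    (hstrict : ∀ t, ∀ a b : ℝ, β t * (a - b) ^ 2 ≤ (c t a - c t b) * (a - b))
    (βmin : ℝ) (hβmin : IsGLB (Set.range β) βmin)
    (x y : Fin I → EuclideanSpace ℝ (Fin T))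
    (hx : ∀ i, x i ∈ X i) (hy : ∀ i, y i ∈ X i)
    (g h : Fin I → EuclideanSpace ℝ (Fin T))
    (hg : ∀ i, ∃ gi ∈ subdiff (fun z => - u i z) (x i), g i = cvec c (∑ j, x j) + gi)
    (hh : ∀ i, ∃ hi ∈ subdiff (fun z => - u i z) (y i), h i = cvec c (∑ j, y j) + hi) :
    βmin * ‖(∑ i, x i) - (∑ i, y i)‖ ^ 2 ≤ ∑ i, ⟪g i - h i, x i - y i⟫ :=
  agg_strong_monotonicity_of_H'_general u c β hstrict βmin hβmin x y g h hg hh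
end
end
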